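/- arXiv:2308.02324 — 5 statements merged into one kernel-verified Lean document; each statement's English description precedes it below -/
import Mathlib

section
/- For all real c with |c| < 1, the definite integral ∫₀^π log(1 + c·cos θ) dθ equals π·log((1 + √(1 - c²))/2). -/
/-!
Let `r = c / (1 + √(1 - c²))`, the root of `c r² - 2 r + c = 0` in `(-1, 1)`. Then
`1 + c cos θ = |e^{iθ} + r|² / (1 + r²)`, and `log |z + r|` is harmonic near the closed unit
disc, so its mean over the unit circle is its value `log 1 = 0` at the centre. The integrand
is symmetric under `θ ↦ 2π - θ`, so its mean over `[0, π]` vanishes too, leaving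
`∫₀^π log (1 + c cos θ) dθ = -π log (1 + r²) = π log ((1 + √(1 - c²)) / 2)`.
-/

open Real MeasureTheory

theorem intervalIntegral.integral_comp_cos_zero_two_pi {E : Type*} [NormedAddCommGroup E]
    [NormedSpace ℝ E] {f : ℝ → E} (hf : IntervalIntegrable (fun θ ↦ f (cos θ)) volume 0 π) :
    ∫ θ in 0..2 * π, f (cos θ) = (2 : ℝ) • ∫ θ in 0..π, f (cos θ) := by
  have hreflect : ∫ θ in π..2 * π, f (cos θ) = ∫ θ in 0..π, f (cos θ) := by
    have := intervalIntegral.integral_comp_sub_left (fun θ ↦ f (cos θ)) (a := 0) (b := π)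
      (2 * π)
    simp only [cos_two_pi_sub, sub_zero, show 2 * π - π = π by ring] at this
    exact this.symm
  have hf' : IntervalIntegrable (fun θ ↦ f (cos θ)) volume π (2 * π) := by
    simpa [cos_two_pi_sub, show 2 * π - π = π by ring] using (hf.comp_sub_left (2 * π)).symm
  rw [← intervalIntegral.integral_add_adjacent_intervals hf hf', hreflect, two_smul]

lemma one_add_two_mul_cos_add_sq_pos {r : ℝ} (hr : |r| < 1) (θ : ℝ) :
    0 < 1 + 2 * r * cos θ + r ^ 2 := by
  have hrc : |r * cos θ| ≤ |r| := by
    rw [abs_mul]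
    exact mul_le_of_le_one_right (abs_nonneg r) (abs_cos_le_one θ)
  nlinarith [neg_abs_le (r * cos θ), sq_abs r, abs_nonneg r]

lemma norm_circleMap_add_sq (r θ : ℝ) :
    ‖circleMap 0 1 θ + r‖ ^ 2 = 1 + 2 * r * cos θ + r ^ 2 := by
  rw [Complex.sq_norm, Complex.normSq_apply]
  simp only [circleMap_zero, Complex.ofReal_one, one_mul, Complex.add_re, Complex.add_im,
    Complex.exp_ofReal_mul_I_re, Complex.exp_ofReal_mul_I_im, Complex.ofReal_re,
    Complex.ofReal_im, add_zero]
  nlinarith [sin_sq_add_cos_sq θ]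

theorem integral_log_one_add_two_mul_cos_add_sq_zero_two_pi {r : ℝ} (hr : |r| < 1) :
    ∫ θ in 0..2 * π, log (1 + 2 * r * cos θ + r ^ 2) = 0 := by
  have hmean : circleAverage (log ‖· - (-r : ℂ)‖) 0 1 = 0 :=
    circleAverage_log_norm_sub_const₀ (by simpa using hr)
  have hlog (θ : ℝ) :
      log (1 + 2 * r * cos θ + r ^ 2) = 2 * log ‖circleMap 0 1 θ - (-r : ℂ)‖ := by
    rw [sub_neg_eq_add, ← norm_circleMap_add_sq, log_pow, Nat.cast_ofNat]
  simp_rw [hlog, intervalIntegral.integral_const_mul]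
  rw [circleAverage_def, smul_eq_zero] at hmean
  simpa using hmean

lemma continuous_log_one_add_two_mul_cos_add_sq {r : ℝ} (hr : |r| < 1) :
    Continuous fun θ ↦ log (1 + 2 * r * cos θ + r ^ 2) :=
  .log (by fun_prop) fun θ ↦ (one_add_two_mul_cos_add_sq_pos hr θ).ne'

theorem integral_log_one_add_two_mul_cos_add_sq {r : ℝ} (hr : |r| < 1) :
    ∫ θ in 0..π, log (1 + 2 * r * cos θ + r ^ 2) = 0 := by
  have h := integral_log_one_add_two_mul_cos_add_sq_zero_two_pi hr
  rw [intervalIntegral.integral_comp_cos_zero_two_pi (f := fun x ↦ log (1 + 2 * r * x + r ^ 2))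
    ((continuous_log_one_add_two_mul_cos_add_sq hr).intervalIntegrable _ _)] at h
  simpa using h

theorem integral_log_one_add_mul_cos_of_mul_one_add_sq_eq {c r : ℝ} (hr : |r| < 1)
    (hcr : c * (1 + r ^ 2) = 2 * r) :
    ∫ θ in 0..π, log (1 + c * cos θ) = -(π * log (1 + r ^ 2)) := by
  have hsplit (θ : ℝ) :
      log (1 + c * cos θ) = log (1 + 2 * r * cos θ + r ^ 2) - log (1 + r ^ 2) := by
    rw [← log_div (one_add_two_mul_cos_add_sq_pos hr θ).ne' (by positivity)]
    congr 1
    field_simp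
    linear_combination cos θ * hcr
  simp_rw [hsplit]
  rw [intervalIntegral.integral_sub
      ((continuous_log_one_add_two_mul_cos_add_sq hr).intervalIntegrable _ _)
      intervalIntegrable_const,
    integral_log_one_add_two_mul_cos_add_sq hr, intervalIntegral.integral_const]
  simp

theorem integral_log_one_add_cos (c : ℝ) (hc : |c| < 1) :
    ∫ θ in (0:ℝ)..π, Real.log (1 + c * Real.cos θ)
      = π * Real.log ((1 + Real.sqrt (1 - c ^ 2)) / 2) := by
  have hc2 : c ^ 2 < 1 := (sq_lt_one_iff_abs_lt_one c).mpr hc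
  set s := √(1 - c ^ 2)
  have hs : s ^ 2 = 1 - c ^ 2 := sq_sqrt (by linarith)
  have h1s : 0 < 1 + s := by positivity
  set r := c / (1 + s)
  have hr : |r| < 1 := by
    rw [abs_div, abs_of_pos h1s, div_lt_one h1s]
    linarith [sqrt_nonneg (1 - c ^ 2)]
  have hcr : c * (1 + r ^ 2) = 2 * r := by
    simp only [r]
    field_simp
    linear_combination c * hs
  have hhalf : (1 + s) / 2 = (1 + r ^ 2)⁻¹ := by
    simp only [r]
    field_simp
    linear_combination hs
  rw [integral_log_one_add_mul_cos_of_mul_one_add_sq_eq hr hcr, hhalf, log_inv, mul_neg]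
end

section
/- Let θ be uniformly distributed on [0, 2π]. For all complex x, y, the expectation E[log(1 + |x + e^{iθ} y|²)] equals log((1 + a + √((1+a)² − b²))/2), where a = |x|² + |y|² and b = 2|x||y|. -/
/-!
Let `A` be the larger root of `A² - (1 + a) A + |x|²|y|² = 0`, so that `A` is the right-hand side
inside the logarithm. On the unit circle, `1 + |x + e^{iθ} y|²` is `|β + √A e^{iθ}|²` with
`β = x ȳ / √A`, because both sides have the same constant term `A + |x|²|y|²/A = 1 + a` and the
same first Fourier coefficient `x̄ y`. Since `|β| ≤ √A`, the circle of radius `√A` about `β`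
surrounds the origin, and the mean of `log |z|` over such a circle is `log √A` (Jensen's formula).
-/

open Real MeasureTheory

theorem add_sqrt_div_two_mul_sub_eq_sq {s p : ℝ} (h : (2 * p) ^ 2 ≤ s ^ 2) :
    (s + √(s ^ 2 - (2 * p) ^ 2)) / 2 * (s - (s + √(s ^ 2 - (2 * p) ^ 2)) / 2) = p ^ 2 := by
  have hsq := sq_sqrt (sub_nonneg.mpr h)
  linear_combination (-1 / 4 : ℝ) * hsq

open Complex ComplexConjugate

theorem norm_add_exp_mul_I_mul_sq (x y : ℂ) (t : ℝ) :
    ‖x + exp (t * I) * y‖ ^ 2 = ‖x‖ ^ 2 + ‖y‖ ^ 2 + 2 * (conj x * y * exp (t * I)).re := by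
  rw [Complex.sq_norm, Complex.sq_norm, Complex.sq_norm, normSq_add, normSq_mul,
    normSq_eq_norm_sq (Complex.exp _), norm_exp_ofReal_mul_I, ← conj_re (x * _)]
  simp only [map_mul, conj_conj]
  ring_nf

theorem one_add_norm_add_exp_mul_I_mul_sq (x y : ℂ) {α : ℝ} (hα : α ≠ 0)
    (h : α ^ 2 * (1 + (‖x‖ ^ 2 + ‖y‖ ^ 2) - α ^ 2) = (‖x‖ * ‖y‖) ^ 2) (t : ℝ) :
    1 + ‖x + exp (t * I) * y‖ ^ 2 = ‖circleMap (x * conj y / α) α t‖ ^ 2 := by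
  have hα' : (α : ℂ) ≠ 0 := ofReal_ne_zero.mpr hα
  have hconj : conj (x * conj y / α) * α = conj x * y := by
    rw [map_div₀, conj_ofReal, map_mul, conj_conj, div_mul_cancel₀ _ hα']
  rw [circleMap, mul_comm (α : ℂ), norm_add_exp_mul_I_mul_sq, norm_add_exp_mul_I_mul_sq, hconj,
    norm_div, norm_mul, norm_conj, norm_real, Real.norm_eq_abs, div_pow, sq_abs]
  field_simp
  linear_combination h

theorem circleAverage_log_sq_norm {c : ℂ} {R : ℝ} (h : ‖c‖ ≤ R) :
    circleAverage (fun z ↦ Real.log (‖z‖ ^ 2)) c R = Real.log (R ^ 2) := by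
  have h0 : (0 : ℂ) ∈ Metric.closedBall c |R| := by
    simpa using h.trans (le_abs_self R)
  simp_rw [Real.log_pow, ← smul_eq_mul, circleAverage_fun_smul]
  simpa using circleAverage_log_norm_sub_const_of_mem_closedBall h0

/-- For `θ` uniformly distributed on `[0, 2π]`,
`E[log(1 + |x + e^{iθ} y|²)] = log((1 + a + √((1+a)² − b²))/2)`
where `a = |x|² + |y|²` and `b = 2|x||y|`. -/
theorem expectation_log_one_add_sq_abs (x y : ℂ) :
    (∫ θ in (0:ℝ)..(2 * π),
        Real.log (1 + ‖x + Complex.exp (θ * Complex.I) * y‖ ^ 2)) / (2 * π)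
      = Real.log ((1 + (‖x‖ ^ 2 + ‖y‖ ^ 2)
          + Real.sqrt ((1 + (‖x‖ ^ 2 + ‖y‖ ^ 2)) ^ 2
              - (2 * ‖x‖ * ‖y‖) ^ 2)) / 2) := by
  set s := 1 + (‖x‖ ^ 2 + ‖y‖ ^ 2)
  have hps : 2 * (‖x‖ * ‖y‖) ≤ s := by nlinarith [sq_nonneg (‖x‖ - ‖y‖)]
  rw [mul_assoc 2 ‖x‖]
  set A := (s + √(s ^ 2 - (2 * (‖x‖ * ‖y‖)) ^ 2)) / 2 with hA_def
  have hsA : s / 2 ≤ A := by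
    rw [hA_def]
    linarith [sqrt_nonneg (s ^ 2 - (2 * (‖x‖ * ‖y‖)) ^ 2)]
  have hA : (√A) ^ 2 = A := sq_sqrt (by positivity)
  have hα : √A ≠ 0 := (sqrt_pos.mpr (by positivity)).ne'
  have hroot : (√A) ^ 2 * (s - (√A) ^ 2) = (‖x‖ * ‖y‖) ^ 2 := by
    rw [hA]
    exact add_sqrt_div_two_mul_sub_eq_sq (pow_le_pow_left₀ (by positivity) hps 2)
  have hβ : ‖x * conj y / √A‖ ≤ √A := by
    rw [norm_div, norm_mul, norm_conj, norm_real, Real.norm_eq_abs, abs_of_pos (by positivity),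
      div_le_iff₀ (by positivity), ← sq, hA]
    linarith
  calc _ = circleAverage (fun z ↦ Real.log (‖z‖ ^ 2)) (x * conj y / √A) √A := by
        rw [circleAverage_def, smul_eq_mul, div_eq_inv_mul]
        congr 1
        refine intervalIntegral.integral_congr fun t _ ↦ ?_
        rw [one_add_norm_add_exp_mul_I_mul_sq x y hα hroot]
    _ = Real.log A := by rw [circleAverage_log_sq_norm hβ, hA]
end

section
/- Fix x ∈ ℂ. The function f : ℝ₊ → ℝ defined by f(s) = log((1 + a + √((1+a)² − b²))/2), where a = |x|² + s and b = 2|x|√s, is strictly increasing on [0, ∞). -/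
open Real Set

/-!
With `c = s + 1 - |x|²`, the discriminant `(1 + a)² - b²` equals `c² + (2|x|)²` and
`1 + a = c + 2|x|²`, so the argument of the logarithm is `|x|² + (c + √(c² + 4|x|²)) / 2`.
Since `c` increases with `s`, it suffices that `c ↦ c + √(c² + k)` increases strictly:
squaring shows `√(a² + k) < (b - a) + √(b² + k)` as soon as `b + √(b² + k) > 0`.
-/

lemma sq_one_add_sub_sq_two_mul_sqrt (r : ℝ) {s : ℝ} (hs : 0 ≤ s) :
    (1 + (r ^ 2 + s)) ^ 2 - (2 * r * √s) ^ 2 = (s + 1 - r ^ 2) ^ 2 + (2 * r) ^ 2 := by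
  rw [mul_pow, sq_sqrt hs]
  ring

lemma add_sqrt_sq_add_sq_pos {c d : ℝ} (h : 0 < c ∨ d ≠ 0) : 0 < c + √(c ^ 2 + d ^ 2) := by
  rcases h with hc | hd
  · positivity
  · have : |c| < √(c ^ 2 + d ^ 2) := by
      rw [← sqrt_sq_eq_abs]
      exact sqrt_lt_sqrt (sq_nonneg c) (by simpa using pow_pos (abs_pos.2 hd) 2)
    linarith [neg_abs_le c]

lemma add_sqrt_sq_add_lt_add_sqrt_sq_add {a b k : ℝ} (hk : 0 ≤ k) (hab : a < b)
    (hb : 0 < b + √(b ^ 2 + k)) : a + √(a ^ 2 + k) < b + √(b ^ 2 + k) := by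
  suffices √(a ^ 2 + k) < b - a + √(b ^ 2 + k) by linarith
  rw [sqrt_lt' (by linarith [sqrt_nonneg (b ^ 2 + k)])]
  have hsq := sq_sqrt (by positivity : 0 ≤ b ^ 2 + k)
  -- the difference of the two sides is `2 (b - a) (b + √(b² + k))`
  nlinarith [mul_pos (sub_pos.2 hab) hb]

/-- For fixed `x ∈ ℂ`, the function
`s ↦ log((1 + a + √((1+a)² − b²))/2)` with `a = |x|² + s`, `b = 2|x|√s`
is strictly increasing on `[0, ∞)`. -/
theorem strictMonoOn_effective_rate (x : ℂ) :
    StrictMonoOn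
      (fun s : ℝ =>
        Real.log ((1 + (‖x‖ ^ 2 + s)
          + Real.sqrt ((1 + (‖x‖ ^ 2 + s)) ^ 2
              - (2 * ‖x‖ * Real.sqrt s) ^ 2)) / 2))
      (Set.Ici (0 : ℝ)) := by
  intro s (hs : 0 ≤ s) t (ht : 0 ≤ t) hst
  simp only [sq_one_add_sub_sq_two_mul_sqrt _ hs, sq_one_add_sub_sq_two_mul_sqrt _ ht]
  have hpos : 0 < t + 1 - ‖x‖ ^ 2 + √((t + 1 - ‖x‖ ^ 2) ^ 2 + (2 * ‖x‖) ^ 2) := by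
    apply add_sqrt_sq_add_sq_pos
    rcases eq_or_ne x 0 with rfl | hx
    · left
      simp only [norm_zero]
      linarith
    · right
      positivity
  have hlt := add_sqrt_sq_add_lt_add_sqrt_sq_add (sq_nonneg (2 * ‖x‖))
    (by linarith : s + 1 - ‖x‖ ^ 2 < t + 1 - ‖x‖ ^ 2) hpos
  apply log_lt_log
  · linarith [sq_nonneg ‖x‖, sqrt_nonneg ((s + 1 - ‖x‖ ^ 2) ^ 2 + (2 * ‖x‖) ^ 2)]
  · linarith
end

section
/- Let P > 0 and let {θ_l} be i.i.d. random variables uniform on [0, 2π]. Define R̄(i) = E[log(1 + |∑_{l=1}^{i} e^{iθ_l}|² P)] for i ≥ 0. Then the sequence R̄ is strictly increasing: R̄(i+1) > R̄(i) for every i ≥ 0. -/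
/-!
Write `S` for the sum of the first `i` phasors and `Z = e^{iθ_i}`. These are independent and `Z`
is uniform on the unit circle, so `R̄(i+1)` is the expectation over `S = s` of the circle average
of `w ↦ log (1 + P |s + w|²)`. On `|w| = 1` this function equals `2 log |M + P s̄ w| - log M`,
where `M` is the larger root of `x² - (1 + P + P|s|²) x + P²|s|²`; since `P |s| < M`, the mean
value property of the harmonic function `log |M + P s̄ w|` makes the circle average `log M`.
The quadratic takes the value `-P < 0` at `1 + P|s|²`, so `M > 1 + P|s|²`: the inner average
strictly exceeds `log (1 + P|s|²)` for every `s`, and integrating over `s` gives `R̄(i+1) > R̄(i)`.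
-/

open Real MeasureTheory ProbabilityTheory ComplexConjugate Metric Complex

theorem circleAverage_log_norm_add_mul {a b : ℂ} (h : ‖b‖ < ‖a‖) :
    circleAverage (fun w ↦ Real.log ‖a + b * w‖) 0 1 = Real.log ‖a‖ := by
  have := InnerProductSpace.HarmonicOnNhd.circleAverage_eq
    (f := fun w ↦ Real.log ‖a + b * w‖) (c := 0) (R := 1)
    fun w hw ↦ AnalyticAt.harmonicAt_log_norm (by fun_prop) fun h0 ↦ by
      have hw : ‖w‖ ≤ 1 := by simpa using hw
      have : ‖a‖ = ‖b‖ * ‖w‖ := by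
        rw [← norm_mul, eq_neg_of_add_eq_zero_left h0, norm_neg]
      nlinarith [norm_nonneg b]
  simpa using this

theorem exists_root_gt_one_add_sq_mul (P r : ℝ) (hP : 0 < P) :
    ∃ M, 1 + r ^ 2 * P < M ∧ P * r < M ∧ M ^ 2 + (P * r) ^ 2 = M * (1 + P + r ^ 2 * P) := by
  have hD : 0 < (1 + P + r ^ 2 * P) ^ 2 - 4 * (P * r) ^ 2 := by
    have h₁ : 0 < 1 + P * (r - 1) ^ 2 := by positivity
    have h₂ : 0 < 1 + P * (r + 1) ^ 2 := by positivity
    nlinarith [mul_pos h₁ h₂]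
  have hsq := Real.sq_sqrt hD.le
  have hpos := Real.sqrt_pos.2 hD
  refine ⟨(1 + P + r ^ 2 * P + √((1 + P + r ^ 2 * P) ^ 2 - 4 * (P * r) ^ 2)) / 2, ?_, ?_,
    by linear_combination hsq / 4⟩
  · have : 1 + r ^ 2 * P - P < √((1 + P + r ^ 2 * P) ^ 2 - 4 * (P * r) ^ 2) := by
      apply Real.lt_sqrt_of_sq_lt
      nlinarith
    linarith
  · nlinarith [sq_nonneg (r - 1)]

theorem mul_one_add_sq_norm_add_mul {M P : ℝ} {s w : ℂ} (hw : ‖w‖ = 1)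
    (h : M ^ 2 + (P * ‖s‖) ^ 2 = M * (1 + P + ‖s‖ ^ 2 * P)) :
    M * (1 + ‖s + w‖ ^ 2 * P) = ‖(M : ℂ) + P * conj s * w‖ ^ 2 := by
  have hw' : w.re ^ 2 + w.im ^ 2 = 1 := by
    have := congrArg (· ^ 2) hw
    simp only [Complex.sq_norm, Complex.normSq_apply] at this
    linear_combination this
  have hs : ‖s‖ ^ 2 = s.re ^ 2 + s.im ^ 2 := by
    rw [Complex.sq_norm, Complex.normSq_apply]
    ring
  rw [mul_pow, hs] at h
  simp only [Complex.sq_norm, Complex.normSq_apply, add_re, add_im, mul_re, mul_im, ofReal_re,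
    ofReal_im, conj_re, conj_im]
  linear_combination (-1) * h + (M * P - P ^ 2 * (s.re ^ 2 + s.im ^ 2)) * hw'

theorem log_one_add_sq_mul_lt_circleAverage {P : ℝ} (hP : 0 < P) (s : ℂ) :
    Real.log (1 + ‖s‖ ^ 2 * P) <
      circleAverage (fun w ↦ Real.log (1 + ‖s + w‖ ^ 2 * P)) 0 1 := by
  obtain ⟨M, hM, hPM, hroot⟩ := exists_root_gt_one_add_sq_mul P ‖s‖ hP
  have hpos : 0 < 1 + ‖s‖ ^ 2 * P := by positivity
  have hM₀ : 0 < M := hpos.trans hM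
  have hsphere : Set.EqOn (fun w ↦ Real.log (1 + ‖s + w‖ ^ 2 * P))
      (fun w ↦ (2 : ℝ) • Real.log ‖(M : ℂ) + P * conj s * w‖ - Real.log M) (sphere 0 |1|) := by
    intro w hw
    have hw : ‖w‖ = 1 := by simpa using hw
    calc Real.log (1 + ‖s + w‖ ^ 2 * P)
        = Real.log (M * (1 + ‖s + w‖ ^ 2 * P)) - Real.log M := by
          rw [Real.log_mul hM₀.ne' (by positivity)]
          ring
      _ = (2 : ℝ) • Real.log ‖(M : ℂ) + P * conj s * w‖ - Real.log M := by
          rw [mul_one_add_sq_norm_add_mul hw hroot, Real.log_pow, smul_eq_mul]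
          push_cast
          ring
  have hnorm : ‖(P : ℂ) * conj s‖ < ‖(M : ℂ)‖ := by
    simpa [abs_of_pos hP, abs_of_pos hM₀] using hPM
  have hint : CircleIntegrable (fun w ↦ Real.log ‖(M : ℂ) + P * conj s * w‖) 0 1 :=
    MeromorphicOn.circleIntegrable_log_norm fun _ _ ↦ by fun_prop
  rw [circleAverage_congr_sphere hsphere, circleAverage_fun_sub (c := 0) (R := 1)
    (f₁ := fun w ↦ (2 : ℝ) • Real.log ‖(M : ℂ) + P * conj s * w‖) hint.const_smul
    (circleIntegrable_const _ _ _), circleAverage_fun_smul, circleAverage_const,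
    circleAverage_log_norm_add_mul hnorm]
  simpa [abs_of_pos hM₀, two_mul] using Real.log_lt_log hpos hM

theorem integral_lt_integral_of_forall_lt {α : Type*} [MeasurableSpace α] {μ : Measure α}
    [NeZero μ] {f g : α → ℝ} (hf : Integrable f μ) (hg : Integrable g μ) (h : ∀ x, f x < g x) :
    ∫ x, f x ∂μ < ∫ x, g x ∂μ := by
  rw [← sub_pos, ← integral_sub hg hf,
    integral_pos_iff_support_of_nonneg (fun x ↦ (sub_pos.2 (h x)).le) (hg.sub hf),
    Function.support_eq_univ fun x ↦ (sub_pos.2 (h x)).ne']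
  exact Measure.measure_univ_pos.2 (NeZero.ne μ)

theorem Continuous.integrable_comp_of_norm_le {Ω E F : Type*} [MeasurableSpace Ω]
    {μ : Measure Ω} [IsFiniteMeasure μ] [NormedAddCommGroup E] [ProperSpace E]
    [MeasurableSpace E] [OpensMeasurableSpace E] [NormedAddCommGroup F] {g : E → F}
    (hg : Continuous g) {X : Ω → E} (hX : Measurable X) {C : ℝ} (hC : ∀ ω, ‖X ω‖ ≤ C) :
    Integrable (fun ω ↦ g (X ω)) μ := by
  obtain ⟨K, hK⟩ := (isCompact_closedBall (0 : E) C).exists_bound_of_continuousOn hg.continuousOn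
  exact .of_bound (hg.aestronglyMeasurable.comp_measurable hX) K
    (ae_of_all _ fun ω ↦ hK _ (by simpa using hC ω))

namespace ProbabilityTheory

variable {Ω G E : Type*} [MeasurableSpace Ω] {μ : Measure Ω} [IsFiniteMeasure μ]
  [AddMonoid G] [MeasurableSpace G] [MeasurableAdd₂ G] [NormedAddCommGroup E] [NormedSpace ℝ E]
  {X Y : Ω → G} {F : G → E}

theorem IndepFun.integral_comp_add (hXY : IndepFun X Y μ) (hX : Measurable X)
    (hY : Measurable Y) (hF : StronglyMeasurable F)
    (hFXY : Integrable (fun ω ↦ F (X ω + Y ω)) μ) :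
    ∫ ω, F (X ω + Y ω) ∂μ = ∫ x, ∫ y, F (x + y) ∂(μ.map Y) ∂(μ.map X) := by
  have hmap : μ.map (X + Y) = μ.map X ∗ μ.map Y := hXY.map_add_eq_map_conv_map hX hY
  have hint : Integrable F (μ.map (X + Y)) :=
    (integrable_map_measure hF.aestronglyMeasurable (hX.add hY).aemeasurable).2 hFXY
  rw [← integral_conv (hmap ▸ hint), ← hmap,
    integral_map (hX.add hY).aemeasurable hF.aestronglyMeasurable]
  rfl

theorem IndepFun.integrable_integral_comp_add (hXY : IndepFun X Y μ) (hX : Measurable X)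
    (hY : Measurable Y) (hF : StronglyMeasurable F)
    (hFXY : Integrable (fun ω ↦ F (X ω + Y ω)) μ) :
    Integrable (fun x ↦ ∫ y, F (x + y) ∂(μ.map Y)) (μ.map X) := by
  have hint : Integrable F (μ.map (X + Y)) :=
    (integrable_map_measure hF.aestronglyMeasurable (hX.add hY).aemeasurable).2 hFXY
  rw [hXY.map_add_eq_map_conv_map hX hY, Measure.conv,
    integrable_map_measure hF.aestronglyMeasurable (by fun_prop)] at hint
  exact hint.integral_prod_left

end ProbabilityTheory

theorem integral_exp_mul_I_eq_circleAverage {Ω : Type*} [MeasurableSpace Ω] {μ : Measure Ω}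
    {θ : Ω → ℝ} (hθ : Measurable θ)
    (hunif : μ.map θ = (ENNReal.ofReal (2 * π))⁻¹ • volume.restrict (Set.Icc 0 (2 * π)))
    {g : ℂ → ℝ} (hg : Measurable g) :
    ∫ z, g z ∂(μ.map fun ω ↦ exp (θ ω * I)) = circleAverage g 0 1 := by
  have hexp : Measurable fun x : ℝ ↦ exp (x * I) := by fun_prop
  change ∫ z, g z ∂(μ.map ((fun x : ℝ ↦ exp (x * I)) ∘ θ)) = _
  rw [← Measure.map_map hexp hθ, hunif, integral_map hexp.aemeasurable
    hg.aestronglyMeasurable, integral_smul_measure, circleAverage_def,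
    intervalIntegral.integral_of_le two_pi_pos.le, integral_Icc_eq_integral_Ioc,
    ENNReal.toReal_inv, ENNReal.toReal_ofReal two_pi_pos.le]
  simp [circleMap_zero]

theorem norm_sum_exp_mul_I_le (θ : ℕ → ℝ) (n : ℕ) :
    ‖∑ l ∈ Finset.range n, exp (θ l * I)‖ ≤ n :=
  (norm_sum_le _ _).trans (by simp [norm_exp_ofReal_mul_I])

/-- With i.i.d. phases `θ_l ~ Uniform(0, 2π)`, the sequence
`R̄(i) = E[log(1 + |∑_{l<i} e^{iθ_l}|² P)]` is strictly increasing. -/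
theorem rate_strictMono
    {Ω : Type*} [MeasurableSpace Ω] (μ : Measure Ω) [IsProbabilityMeasure μ]
    (θ : ℕ → Ω → ℝ) (hmeas : ∀ l, Measurable (θ l))
    (hindep : iIndepFun θ μ)
    (hunif : ∀ l, μ.map (θ l)
      = (ENNReal.ofReal (2 * π))⁻¹ • volume.restrict (Set.Icc 0 (2 * π)))
    (P : ℝ) (hP : 0 < P) :
    StrictMono (fun i : ℕ =>
      ∫ ω, Real.log (1 + ‖
        (∑ l ∈ Finset.range i, Complex.exp (θ l ω * Complex.I))‖ ^ 2 * P) ∂μ) := by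
  refine strictMono_nat_of_lt_succ fun i ↦ ?_
  set F : ℂ → ℝ := fun s ↦ Real.log (1 + ‖s‖ ^ 2 * P)
  have hF : Continuous F := by fun_prop (disch := intro s; positivity)
  set Z : ℕ → Ω → ℂ := fun l ω ↦ exp (θ l ω * I)
  have hZ : ∀ l, Measurable (Z l) := fun l ↦ by fun_prop
  set S : Ω → ℂ := fun ω ↦ ∑ l ∈ Finset.range i, Z l ω
  have hS : Measurable S := by fun_prop
  have hSZ : IndepFun S (Z i) μ := by
    have := (hindep.comp (fun _ x ↦ exp (x * I)) fun _ ↦ by fun_prop).indepFun_finsetSum_of_notMem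
      hZ (Finset.notMem_range_self (n := i))
    rwa [Finset.sum_fn] at this
  have hFS : Integrable (fun ω ↦ F (S ω)) μ :=
    hF.integrable_comp_of_norm_le hS fun ω ↦ norm_sum_exp_mul_I_le (θ · ω) i
  have hFSZ : Integrable (fun ω ↦ F (S ω + Z i ω)) μ :=
    hF.integrable_comp_of_norm_le (hS.add (hZ i)) fun ω ↦ by
      simpa [S, Z, ← Finset.sum_range_succ] using norm_sum_exp_mul_I_le (θ · ω) (i + 1)
  have : IsProbabilityMeasure (μ.map S) := Measure.isProbabilityMeasure_map hS.aemeasurable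
  show ∫ ω, F (S ω) ∂μ < ∫ ω, F (∑ l ∈ Finset.range (i + 1), Z l ω) ∂μ
  simp only [Finset.sum_range_succ]
  calc ∫ ω, F (S ω) ∂μ = ∫ s, F s ∂(μ.map S) :=
        (integral_map hS.aemeasurable hF.aestronglyMeasurable).symm
    _ < ∫ s, ∫ z, F (s + z) ∂(μ.map (Z i)) ∂(μ.map S) := by
      refine integral_lt_integral_of_forall_lt
        ((integrable_map_measure hF.aestronglyMeasurable hS.aemeasurable).2 hFS)
        (hSZ.integrable_integral_comp_add hS (hZ i) hF.stronglyMeasurable hFSZ) fun s ↦ ?_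
      rw [integral_exp_mul_I_eq_circleAverage (hmeas i) (hunif i) (by fun_prop)]
      exact log_one_add_sq_mul_lt_circleAverage hP s
    _ = ∫ ω, F (S ω + Z i ω) ∂μ :=
        (hSZ.integral_comp_add hS (hZ i) hF.stronglyMeasurable hFSZ).symm
end

section
/- Let α ~ Binomial(L, 1 − p_B) and P > 0, and let R̄ : {0,…,L} → ℝ be nonnegative and increasing with R̄(0) = 0. Then sup_{r ∈ ℝ} r·P(R̄(α) ≥ r) = max_{i ∈ {1,…,L}} P(α ≥ i)·R̄(i). -/
/-!
For `r > 0` let `i` be the least index with `r ≤ R i`; monotonicity of `R` turns the event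
`{r ≤ R α}` into `{i ≤ α}`, and `R 0 = 0 < r` forces `i ≥ 1`. Hence `r · P(r ≤ R α)` is at most
`P(i ≤ α) · R i`, a term of the maximum (or `0` when the event is empty), while conversely the
choice `r = R i` attains `P(i ≤ α) · R i`.
-/

open MeasureTheory

theorem Monotone.le_apply_iff_find_le {β : Type*} [Preorder β] [DecidableLE β] {R : ℕ → β}
    (hR : Monotone R) {r : β} (h : ∃ i, r ≤ R i) (n : ℕ) : r ≤ R n ↔ Nat.find h ≤ n :=
  ⟨fun hn => Nat.find_min' h hn, fun hn => (Nat.find_spec h).trans (hR hn)⟩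

theorem mul_measureReal_le_sup' {Ω : Type*} [MeasurableSpace Ω] {μ : Measure Ω}
    {L : ℕ} {α : Ω → ℕ} {R : ℕ → ℝ} (hL : 1 ≤ L) (hle : ∀ ω, α ω ≤ L) (hR : Monotone R)
    (hR0 : R 0 = 0) (r : ℝ) :
    r * μ.real {ω | r ≤ R (α ω)}
      ≤ (Finset.Icc 1 L).sup' (Finset.nonempty_Icc.mpr hL)
          (fun i => μ.real {ω | i ≤ α ω} * R i) := by
  set S := (Finset.Icc 1 L).sup' (Finset.nonempty_Icc.mpr hL)
    (fun i => μ.real {ω | i ≤ α ω} * R i)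
  have hRnonneg : ∀ i, 0 ≤ R i := fun i => hR0 ▸ hR (Nat.zero_le i)
  have hS : 0 ≤ S := (mul_nonneg measureReal_nonneg (hRnonneg 1)).trans
    (Finset.le_sup' (fun i => μ.real {ω | i ≤ α ω} * R i) (Finset.mem_Icc.mpr ⟨le_rfl, hL⟩))
  rcases le_or_gt r 0 with hr | hr
  · exact (mul_nonpos_of_nonpos_of_nonneg hr measureReal_nonneg).trans hS
  rcases Set.eq_empty_or_nonempty {ω | r ≤ R (α ω)} with hempty | ⟨ω₀, hω₀⟩
  · simpa [hempty] using hS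
  have hex : ∃ i, r ≤ R i := ⟨α ω₀, hω₀⟩
  have hevent : {ω | r ≤ R (α ω)} = {ω | Nat.find hex ≤ α ω} :=
    Set.ext fun ω => hR.le_apply_iff_find_le hex (α ω)
  have hfind_pos : 1 ≤ Nat.find hex := by
    by_contra! h0
    have := Nat.find_spec hex
    rw [Nat.lt_one_iff.mp h0, hR0] at this
    linarith
  have hfind_le : Nat.find hex ≤ L := (Nat.find_min' hex hω₀).trans (hle ω₀)
  calc r * μ.real {ω | r ≤ R (α ω)}
      = μ.real {ω | Nat.find hex ≤ α ω} * r := by rw [hevent, mul_comm]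
    _ ≤ μ.real {ω | Nat.find hex ≤ α ω} * R (Nat.find hex) :=
      mul_le_mul_of_nonneg_left (Nat.find_spec hex) measureReal_nonneg
    _ ≤ S := Finset.le_sup' (fun i => μ.real {ω | i ≤ α ω} * R i)
      (Finset.mem_Icc.mpr ⟨hfind_pos, hfind_le⟩)

theorem outage_rate_formula_general
    {Ω : Type*} [MeasurableSpace Ω] (μ : Measure Ω) [IsProbabilityMeasure μ]
    (L : ℕ) (hL : 1 ≤ L)
    (α : Ω → ℕ) (hle : ∀ ω, α ω ≤ L)
    (R : ℕ → ℝ) (hRmono : Monotone R) (hR0 : R 0 = 0) :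
    ⨆ r : ℝ, r * (μ {ω | r ≤ R (α ω)}).toReal
      = (Finset.Icc 1 L).sup' (Finset.nonempty_Icc.mpr hL)
          (fun i => (μ {ω | i ≤ α ω}).toReal * R i) := by
  have hbound := mul_measureReal_le_sup' (μ := μ) hL hle hRmono hR0
  refine le_antisymm (ciSup_le hbound) (Finset.sup'_le _ _ fun i _ => ?_)
  calc μ.real {ω | i ≤ α ω} * R i
      ≤ R i * μ.real {ω | R i ≤ R (α ω)} := by
        rw [mul_comm]
        exact mul_le_mul_of_nonneg_left (measureReal_mono fun ω hω => hRmono hω)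
          (hR0 ▸ hRmono (Nat.zero_le i))
    _ ≤ ⨆ r : ℝ, r * μ.real {ω | r ≤ R (α ω)} :=
      le_ciSup ⟨_, Set.forall_mem_range.mpr hbound⟩ (R i)

/-- Outage rate formula for phase diversity: with `α ~ Binomial(L, 1 − p_B)`
and `R̄ : ℕ → ℝ` nonnegative, increasing, `R̄(0) = 0`,
`sup_r r·P(R̄(α) ≥ r) = max_{i ∈ {1,…,L}} P(α ≥ i)·R̄(i)`. -/
theorem outage_rate_formula
    {Ω : Type*} [MeasurableSpace Ω] (μ : Measure Ω) [IsProbabilityMeasure μ]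
    (L : ℕ) (hL : 1 ≤ L) (p_B : ℝ) (hpB0 : 0 ≤ p_B) (hpB1 : p_B < 1)
    (α : Ω → ℕ) (hmeas : Measurable α) (hle : ∀ ω, α ω ≤ L)
    (hbinom : ∀ i ≤ L, μ {ω | α ω = i}
      = ENNReal.ofReal ((L.choose i : ℝ) * (1 - p_B) ^ i * p_B ^ (L - i)))
    (P : ℝ) (hP : 0 < P)
    (R : ℕ → ℝ) (hRnonneg : ∀ i, 0 ≤ R i) (hRmono : Monotone R) (hR0 : R 0 = 0) :
    ⨆ r : ℝ, r * (μ {ω | r ≤ R (α ω)}).toReal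
      = (Finset.Icc 1 L).sup' (Finset.nonempty_Icc.mpr hL)
          (fun i => (μ {ω | i ≤ α ω}).toReal * R i) :=
  outage_rate_formula_general μ L hL α hle R hRmono hR0
end
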